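/- arXiv:2312.10667 — 6 statements merged into one kernel-verified Lean document; each statement's English description precedes it below -/
import Mathlib

section
/- Let p be prime, a ∈ {1,...,p-1}, and m, n ∈ {1,...,p-2}. Then the sum over k from 1 to p-1, k ≠ a, of k^m / (a-k)^n is congruent mod p to (-1)^(n+1) · a^(m-n) · C(m,n), where 1/(a-k)^n is the modular inverse of (a-k)^n. -/
/-!
After the substitution `x ↦ a - x` the sum becomes `∑ (a - x)^m / x^n`, and `1 / x^n = x^(p-1-n)`
on all of `𝔽_p` (at `x = 0` both sides are `0`). Expanding `(a - x)^m` binomially leaves power sums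
`∑_x x^e` with `0 < e < 2(p - 1)`, which vanish unless `e = p - 1`, where they equal `-1`; only the
binomial term with `x`-degree `n` survives.
-/

open Finset

theorem ZMod.sum_range_natCast {M : Type*} [AddCommMonoid M] (p : ℕ) [NeZero p]
    (f : ZMod p → M) : ∑ k ∈ range p, f k = ∑ x, f x := by
  obtain ⟨p, rfl⟩ := Nat.exists_eq_succ_of_ne_zero (NeZero.ne p)
  rw [← Fin.sum_univ_eq_sum_range]
  exact Fintype.sum_congr _ _ fun i ↦ congrArg f (Fin.cast_val_eq_self i)

theorem zpow_sub_mul_choose {K : Type*} [DivisionRing K] (a : K) (m n : ℕ) :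
    a ^ ((m : ℤ) - n) * m.choose n = a ^ (m - n) * m.choose n := by
  rcases le_or_gt n m with h | h
  · rw [← Nat.cast_sub h, zpow_natCast]
  · rw [Nat.choose_eq_zero_of_lt h, Nat.cast_zero, mul_zero, mul_zero]

namespace FiniteField

variable {K : Type*} [Field K] [Fintype K]

theorem sum_pow_of_ne_zero {e : ℕ} (he : e ≠ 0) :
    ∑ x : K, x ^ e = if Fintype.card K - 1 ∣ e then -1 else 0 := by
  classical
  rw [← sum_pow_units, ← sum_subset (subset_univ (univ.map ⟨_, Units.val_injective⟩)), sum_map]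
  · rfl
  · intro x _ hx
    obtain rfl : x = 0 := by
      by_contra h
      exact hx (mem_map_of_mem _ (mem_univ (Units.mk0 x h)))
    exact zero_pow he

theorem inv_pow_eq_pow_card_sub_one_sub (x : K) {n : ℕ} (hn₀ : n ≠ 0)
    (hn : n < Fintype.card K - 1) : (x ^ n)⁻¹ = x ^ (Fintype.card K - 1 - n) := by
  rcases eq_or_ne x 0 with rfl | hx
  · rw [zero_pow hn₀, inv_zero, zero_pow (by omega)]
  · refine inv_eq_of_mul_eq_one_right ?_
    rw [← pow_add, Nat.add_sub_cancel' hn.le, pow_card_sub_one_eq_one x hx]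

theorem sum_sub_pow_mul_pow_card_sub_one_sub (a : K) {m n : ℕ} (hn : n < Fintype.card K - 1)
    (hm : m < Fintype.card K - 1 + n) :
    ∑ x : K, (a - x) ^ m * x ^ (Fintype.card K - 1 - n) =
      (-1) ^ (n + 1) * a ^ (m - n) * m.choose n := by
  set q := Fintype.card K
  have expand (x : K) : (a - x) ^ m * x ^ (q - 1 - n) =
      ∑ i ∈ range (m + 1), (-1) ^ i * a ^ (m - i) * m.choose i * x ^ (i + (q - 1 - n)) := by
    rw [sub_eq_neg_add, add_pow, sum_mul]
    refine sum_congr rfl fun i _ ↦ ?_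
    rw [neg_pow, pow_add]
    ring
  -- `0 < i + (q - 1 - n) < 2 (q - 1)`, so the only multiple of `q - 1` it can be is `q - 1`.
  have power_sum (i : ℕ) (hi : i ∈ range (m + 1)) :
      ∑ x : K, x ^ (i + (q - 1 - n)) = if n = i then -1 else 0 := by
    have him : i ≤ m := Nat.lt_succ_iff.mp (mem_range.mp hi)
    rw [sum_pow_of_ne_zero (by omega)]
    refine if_congr ⟨fun h ↦ ?_, fun h ↦ ?_⟩ rfl rfl
    · have := Nat.eq_of_dvd_of_lt_two_mul (by omega) h (by omega)
      omega
    · rw [← h, Nat.add_sub_cancel' hn.le]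
  calc ∑ x : K, (a - x) ^ m * x ^ (q - 1 - n)
      = ∑ i ∈ range (m + 1),
          (-1) ^ i * a ^ (m - i) * m.choose i * ∑ x : K, x ^ (i + (q - 1 - n)) := by
        simp_rw [expand, mul_sum]
        exact sum_comm
    _ = ∑ i ∈ range (m + 1), if n = i then (-1) ^ i * a ^ (m - i) * m.choose i * -1 else 0 :=
        sum_congr rfl fun i hi ↦ by rw [power_sum i hi, mul_ite, mul_zero]
    _ = (-1) ^ (n + 1) * a ^ (m - n) * m.choose n := by
        rw [sum_ite_eq]
        split_ifs with h
        · ring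
        · rw [Nat.choose_eq_zero_of_lt (by simpa using h), Nat.cast_zero, mul_zero]

theorem sum_pow_mul_inv_sub_pow (a : K) {m n : ℕ} (hn₀ : n ≠ 0) (hn : n < Fintype.card K - 1)
    (hm : m < Fintype.card K - 1 + n) :
    ∑ x : K, x ^ m * ((a - x) ^ n)⁻¹ = (-1) ^ (n + 1) * a ^ (m - n) * m.choose n := by
  rw [← sum_sub_pow_mul_pow_card_sub_one_sub a hn hm]
  refine Fintype.sum_equiv (Equiv.subLeft a) _ _ fun x ↦ ?_
  rw [Equiv.subLeft_apply, sub_sub_cancel, inv_pow_eq_pow_card_sub_one_sub _ hn₀ hn]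

end FiniteField

theorem sum_ratio_two_terms_general (p a m n : ℕ) [Fact p.Prime]
    (hm : 1 ≤ m ∧ m ≤ p - 2) (hn : 1 ≤ n ∧ n ≤ p - 2) :
    (∑ k ∈ (Finset.Icc 1 (p - 1)).filter (· ≠ a),
        (k : ZMod p) ^ m * (((a : ZMod p) - (k : ZMod p)) ^ n)⁻¹) =
      (-1 : ZMod p) ^ (n + 1) * (a : ZMod p) ^ ((m : ℤ) - (n : ℤ)) * (m.choose n : ZMod p) := by
  set f : ZMod p → ZMod p := fun x ↦ x ^ m * ((a - x) ^ n)⁻¹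
  -- The terms at `k = 0` and `k = a` vanish (the latter because `0⁻¹ = 0`).
  have hf0 : f 0 = 0 := by simp only [f, zero_pow (by omega : m ≠ 0), zero_mul]
  have hfa : f a = 0 := by simp only [f, sub_self, zero_pow (by omega : n ≠ 0), inv_zero, mul_zero]
  have hcard : Fintype.card (ZMod p) = p := ZMod.card p
  calc ∑ k ∈ (Icc 1 (p - 1)).filter (· ≠ a), f k
      = ∑ k ∈ Icc 1 (p - 1), f k := sum_filter_of_ne fun k _ hk hka ↦ hk (by rw [hka, hfa])
    _ = ∑ k ∈ range p, f k := by
        refine sum_subset (fun k hk ↦ ?_) fun k hkp hk ↦ ?_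
        · simp only [mem_Icc, mem_range] at hk ⊢
          omega
        · obtain rfl : k = 0 := by simp only [mem_Icc, mem_range] at hk hkp; omega
          rw [Nat.cast_zero, hf0]
    _ = ∑ x, f x := ZMod.sum_range_natCast p f
    _ = _ := by
        rw [FiniteField.sum_pow_mul_inv_sub_pow _ (by omega) (by omega) (by omega), mul_assoc,
          mul_assoc, zpow_sub_mul_choose]

theorem sum_ratio_two_terms (p a m n : ℕ) [Fact p.Prime]
    (ha : 1 ≤ a ∧ a ≤ p - 1) (hm : 1 ≤ m ∧ m ≤ p - 2) (hn : 1 ≤ n ∧ n ≤ p - 2) :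
    (∑ k ∈ (Finset.Icc 1 (p - 1)).filter (· ≠ a),
        (k : ZMod p) ^ m * (((a : ZMod p) - (k : ZMod p)) ^ n)⁻¹) =
      (-1 : ZMod p) ^ (n + 1) * (a : ZMod p) ^ ((m : ℤ) - (n : ℤ)) * (m.choose n : ZMod p) :=
  sum_ratio_two_terms_general p a m n hm hn
end

section
/- Let p be prime, m, n ∈ {0,...,p-1}, and M = m+n-(p-1). Then C(m, p-1-n) ≡ (-1)^(m+n) · C(n, p-1-m) mod p. -/
open Finset in
lemma key_semi_symm (p m n M : ℕ) (hp : p.Prime) (hmn : m + n = (p - 1) + M)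
    (hm : m ≤ p - 1) (hn : n ≤ p - 1) :
    ((m.choose M : ZMod p)) = (-1 : ZMod p) ^ (m + n) * (n.choose M : ZMod p) := by
  haveI : Fact p.Prime := ⟨hp⟩
  have hp1 : 1 ≤ p := hp.one_lt.le
  have hMm : M ≤ m := by omega
  have hMn : M ≤ n := by omega
  have hMp : M < p := by omega
  have hfac : ((Nat.factorial M : ℕ) : ZMod p) ≠ 0 := by
    rw [Ne, ZMod.natCast_eq_zero_iff, hp.dvd_factorial]
    omega
  apply mul_right_cancel₀ hfac
  have h1 : (m.choose M : ZMod p) * (Nat.factorial M : ZMod p) = ((m.descFactorial M : ℕ) : ZMod p) := by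
    rw [Nat.descFactorial_eq_factorial_mul_choose]; push_cast; ring
  have h2 : (n.choose M : ZMod p) * (Nat.factorial M : ZMod p) = ((n.descFactorial M : ℕ) : ZMod p) := by
    rw [Nat.descFactorial_eq_factorial_mul_choose]; push_cast; ring
  rw [h1, mul_assoc, h2]
  rw [Nat.descFactorial_eq_prod_range, Nat.descFactorial_eq_prod_range]
  push_cast
  have hcm : ∀ i ∈ range M, ((m - i : ℕ) : ZMod p) = (m : ZMod p) - i := by
    intro i hi; simp only [mem_range] at hi
    rw [Nat.cast_sub (by omega)]
  have hcn : ∀ i ∈ range M, ((n - i : ℕ) : ZMod p) = (n : ZMod p) - i := by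
    intro i hi; simp only [mem_range] at hi
    rw [Nat.cast_sub (by omega)]
  rw [prod_congr rfl hcm, prod_congr rfl hcn]
  -- cast relation
  have hcast : (n : ZMod p) + m = -1 + M := by
    have : ((n + m : ℕ) : ZMod p) = (((p - 1) + M : ℕ) : ZMod p) := by
      rw [show n + m = (p - 1) + M by omega]
    push_cast [Nat.cast_sub hp1] at this
    simpa [ZMod.natCast_self] using this
  have hsign : ((-1 : ZMod p)) ^ (p - 1) = 1 := by
    rcases hp.eq_two_or_odd' with h2 | hodd
    · subst h2
      norm_num
      exact CharTwo.neg_eq 1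
    · refine Even.neg_one_pow ?_
      rcases hodd with ⟨k, hk⟩
      exact ⟨k, by omega⟩
  have hsign2 : ((-1 : ZMod p)) ^ (m + n) = (-1 : ZMod p) ^ M := by
    rw [hmn, pow_add, hsign, one_mul]
  rw [hsign2]
  -- product identity
  have hrefl : ∏ i ∈ range M, ((m : ZMod p) - i) =
      ∏ j ∈ range M, ((m : ZMod p) - ((M - 1 - j : ℕ) : ZMod p)) := by
    exact (Finset.prod_range_reflect (fun j => (m : ZMod p) - (j : ZMod p)) M).symm
  rw [hrefl]
  have : ∏ j ∈ range M, ((m : ZMod p) - ((M - 1 - j : ℕ) : ZMod p)) =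
      ∏ j ∈ range M, (-1 : ZMod p) * ((n : ZMod p) - j) := by
    apply prod_congr rfl
    intro j hj; simp only [mem_range] at hj
    have hc : ((M - 1 - j : ℕ) : ZMod p) = (M : ZMod p) - 1 - j := by
      rw [Nat.cast_sub (by omega), Nat.cast_sub (by omega)]; push_cast; ring
    rw [hc]
    have := hcast
    linear_combination this
  rw [this, Finset.prod_mul_distrib, Finset.prod_const, card_range]

theorem choose_semi_symmetry (p m n : ℕ) (hp : p.Prime) (hm : m ≤ p - 1) (hn : n ≤ p - 1) :
    ((m.choose (p - 1 - n) : ZMod p)) =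
      (-1 : ZMod p) ^ (m + n) * (n.choose (p - 1 - m) : ZMod p) := by
  by_cases h : m + n < p - 1
  · rw [Nat.choose_eq_zero_of_lt (by omega), Nat.choose_eq_zero_of_lt (by omega)]
    simp
  · push_neg at h
    set M := m + n - (p - 1) with hM
    have e1 : m.choose (p - 1 - n) = m.choose M := by
      rw [show M = m - (p - 1 - n) by omega]
      exact (Nat.choose_symm (by omega)).symm
    have e2 : n.choose (p - 1 - m) = n.choose M := by
      rw [show M = n - (p - 1 - m) by omega]
      exact (Nat.choose_symm (by omega)).symm
    rw [e1, e2]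
    exact key_semi_symm p m n M hp (by omega) hm hn
end

section
/- Let p be prime, m, n ∈ {1,...,p-1}, and M = m+n+2-p with 0 ≤ M < p-1. Then for every integer j with 0 ≤ j ≤ M, we have (-1)^j C(m, M-j) C(n, j) ≡ C(m,M) C(M,j) + C(m,M-1) C(M-1, j-1) mod p. -/
open Polynomial
open scoped Nat

private lemma descPoch_succ_left_eval {R : Type*} [CommRing R] (k : ℕ) (x : R) :
    (descPochhammer R (k + 1)).eval x = x * (descPochhammer R k).eval (x - 1) := by
  rw [descPochhammer_succ_left]
  simp [eval_comp]

private lemma descPoch_split {R : Type*} [CommRing R] (a b : ℕ) (x : R) :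
    (descPochhammer R a).eval x * (descPochhammer R b).eval (x - a) =
      (descPochhammer R (a + b)).eval x := by
  have h := descPochhammer_mul R a b
  have := congrArg (Polynomial.eval x) h
  simpa [eval_comp] using this

private lemma descPoch_sign {R : Type*} [CommRing R] (j : ℕ) (x : R) :
    (-1 : R) ^ j * (descPochhammer R j).eval x =
      (descPochhammer R j).eval ((j : R) - 1 - x) := by
  rw [descPochhammer_eval_eq_ascPochhammer (r := (j : R) - 1 - x) (n := j)]
  have h1 : (j : R) - 1 - x - j + 1 = -x := by ring
  rw [h1, ascPochhammer_eval_neg_eq_descPochhammer]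

private lemma descPoch_core {R : Type*} [CommRing R] (k : ℕ) (y : R) :
    (descPochhammer R (k + 1)).eval (y + 1) =
      (descPochhammer R (k + 1)).eval y + ((k : R) + 1) * (descPochhammer R k).eval y := by
  rw [descPoch_succ_left_eval, add_sub_cancel_right, descPochhammer_succ_eval]
  ring

theorem choose_congruence_s_one (p m n M : ℕ) (hp : p.Prime)
    (hm : 1 ≤ m ∧ m ≤ p - 1) (hn : 1 ≤ n ∧ n ≤ p - 1)
    (hM : (M : ℤ) = (m : ℤ) + n + 2 - p) (hM2 : M < p - 1)
    (j : ℕ) (hj : j ≤ M) :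
    ((-1 : ZMod p) ^ j * (m.choose (M - j) : ZMod p) * (n.choose j : ZMod p)) =
      (m.choose M : ZMod p) * (M.choose j : ZMod p) +
        (m.choose (M - 1) : ZMod p) *
          (if j = 0 then 0 else ((M - 1).choose (j - 1) : ZMod p)) := by
  haveI : Fact p.Prime := ⟨hp⟩
  rcases Nat.eq_zero_or_pos j with rfl | hj1
  · simp
  obtain ⟨k, rfl⟩ : ∃ k, j = k + 1 := ⟨j - 1, (Nat.succ_pred_eq_of_pos hj1).symm⟩
  rw [if_neg (by omega), Nat.add_sub_cancel]
  have hMp : M < p := lt_of_lt_of_le hM2 (Nat.sub_le p 1)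
  have hjp : k + 1 < p := lt_of_le_of_lt hj hMp
  have hfac : ∀ a : ℕ, a < p → ((a ! : ZMod p) ≠ 0) := by
    intro a ha h0
    rw [ZMod.natCast_eq_zero_iff] at h0
    exact absurd (hp.dvd_factorial.mp h0) (by omega)
  have hne : ((((M - (k + 1)) ! * (k + 1)! : ℕ)) : ZMod p) ≠ 0 := by
    push_cast
    exact mul_ne_zero (hfac _ (by omega)) (hfac _ (by omega))
  apply mul_right_cancel₀ hne
  have hdf : ∀ (a b : ℕ), ((a.descFactorial b : ℕ) : ZMod p)
      = (descPochhammer (ZMod p) b).eval (a : ZMod p) := by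
    intro a b
    rw [descPochhammer_eval_eq_descFactorial]
  have a1 : (m.choose (M - (k + 1)) : ZMod p) * ((M - (k + 1))! : ZMod p)
      = (descPochhammer (ZMod p) (M - (k + 1))).eval (m : ZMod p) := by
    rw [← hdf m (M - (k + 1)), Nat.descFactorial_eq_factorial_mul_choose]
    push_cast; ring
  have a2 : (n.choose (k + 1) : ZMod p) * ((k + 1)! : ZMod p)
      = (descPochhammer (ZMod p) (k + 1)).eval (n : ZMod p) := by
    rw [← hdf n (k + 1), Nat.descFactorial_eq_factorial_mul_choose]
    push_cast; ring
  have a3nat : m.choose M * M.choose (k + 1) * ((M - (k + 1))! * (k + 1)!)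
      = m.descFactorial M := by
    have h1 : M.choose (k + 1) * (k + 1)! * (M - (k + 1))! = M ! :=
      Nat.choose_mul_factorial_mul_factorial hj
    have h2 : m.descFactorial M = M ! * m.choose M :=
      Nat.descFactorial_eq_factorial_mul_choose m M
    calc m.choose M * M.choose (k + 1) * ((M - (k + 1))! * (k + 1)!)
        = (M.choose (k + 1) * (k + 1)! * (M - (k + 1))!) * m.choose M := by ring
      _ = M ! * m.choose M := by rw [h1]
      _ = m.descFactorial M := h2.symm
  have a4nat : m.choose (M - 1) * (M - 1).choose k * ((M - (k + 1))! * (k + 1)!)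
      = (k + 1) * m.descFactorial (M - 1) := by
    have hk1 : k ≤ M - 1 := by omega
    have h1 : (M - 1).choose k * k ! * ((M - 1) - k)! = (M - 1)! :=
      Nat.choose_mul_factorial_mul_factorial hk1
    have h3 : (M - 1) - k = M - (k + 1) := by omega
    have h4 : (k + 1)! = (k + 1) * k ! := Nat.factorial_succ k
    have h2 : m.descFactorial (M - 1) = (M - 1)! * m.choose (M - 1) :=
      Nat.descFactorial_eq_factorial_mul_choose m (M - 1)
    rw [h3] at h1
    calc m.choose (M - 1) * (M - 1).choose k * ((M - (k + 1))! * (k + 1)!)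
        = ((M - 1).choose k * k ! * (M - (k + 1))!) * m.choose (M - 1) * (k + 1) := by
          rw [h4]; ring
      _ = (M - 1)! * m.choose (M - 1) * (k + 1) := by rw [h1]
      _ = (k + 1) * m.descFactorial (M - 1) := by rw [h2]; ring
  have b0 : (n : ZMod p) = (M : ZMod p) - m - 2 := by
    have h := congrArg (fun z : ℤ => (z : ZMod p)) hM
    push_cast at h
    rw [ZMod.natCast_self] at h
    rw [h]; ring
  set y : ZMod p := (m : ZMod p) - M + k + 1 with hy
  have b1 : (-1 : ZMod p) ^ (k + 1) * (descPochhammer (ZMod p) (k + 1)).eval (n : ZMod p)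
      = (descPochhammer (ZMod p) (k + 1)).eval (y + 1) := by
    rw [descPoch_sign (k + 1) (n : ZMod p), b0]
    congr 1
    rw [hy]
    push_cast
    ring
  have b2 : (descPochhammer (ZMod p) (k + 1)).eval (y + 1)
      = (descPochhammer (ZMod p) (k + 1)).eval y
        + ((k : ZMod p) + 1) * (descPochhammer (ZMod p) k).eval y :=
    descPoch_core k y
  have hsub : (m : ZMod p) - ((M - (k + 1) : ℕ) : ZMod p) = y := by
    rw [hy, Nat.cast_sub hj]
    push_cast
    ring
  have b3 : (descPochhammer (ZMod p) (M - (k + 1))).eval (m : ZMod p)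
        * (descPochhammer (ZMod p) (k + 1)).eval y
      = (descPochhammer (ZMod p) M).eval (m : ZMod p) := by
    rw [← hsub, descPoch_split (M - (k + 1)) (k + 1) (m : ZMod p),
      show M - (k + 1) + (k + 1) = M from by omega]
  have b4 : (descPochhammer (ZMod p) (M - (k + 1))).eval (m : ZMod p)
        * (descPochhammer (ZMod p) k).eval y
      = (descPochhammer (ZMod p) (M - 1)).eval (m : ZMod p) := by
    rw [← hsub, descPoch_split (M - (k + 1)) k (m : ZMod p),
      show M - (k + 1) + k = M - 1 from by omega]
  have e3 : (m.choose M : ZMod p) * (M.choose (k + 1) : ZMod p)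
        * (((M - (k + 1))! : ZMod p) * ((k + 1)! : ZMod p))
      = (descPochhammer (ZMod p) M).eval (m : ZMod p) := by
    rw [← hdf m M]
    have := congrArg (fun a : ℕ => (a : ZMod p)) a3nat
    push_cast at this
    rw [← this]
  have e4 : (m.choose (M - 1) : ZMod p) * ((M - 1).choose k : ZMod p)
        * (((M - (k + 1))! : ZMod p) * ((k + 1)! : ZMod p))
      = ((k : ZMod p) + 1) * (descPochhammer (ZMod p) (M - 1)).eval (m : ZMod p) := by
    rw [← hdf m (M - 1)]
    have := congrArg (fun a : ℕ => (a : ZMod p)) a4nat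
    push_cast at this
    rw [← this]
  push_cast
  calc ((-1 : ZMod p) ^ (k + 1) * (m.choose (M - (k + 1)) : ZMod p) * (n.choose (k + 1) : ZMod p))
      * (((M - (k + 1))! : ZMod p) * ((k + 1)! : ZMod p))
      = ((m.choose (M - (k + 1)) : ZMod p) * ((M - (k + 1))! : ZMod p))
          * ((-1 : ZMod p) ^ (k + 1) * ((n.choose (k + 1) : ZMod p) * ((k + 1)! : ZMod p))) := by
        ring
    _ = (descPochhammer (ZMod p) (M - (k + 1))).eval (m : ZMod p)
          * ((descPochhammer (ZMod p) (k + 1)).eval y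
            + ((k : ZMod p) + 1) * (descPochhammer (ZMod p) k).eval y) := by
        rw [a1, a2, b1, b2]
    _ = (descPochhammer (ZMod p) (M - (k + 1))).eval (m : ZMod p)
          * (descPochhammer (ZMod p) (k + 1)).eval y
        + ((k : ZMod p) + 1) * ((descPochhammer (ZMod p) (M - (k + 1))).eval (m : ZMod p)
          * (descPochhammer (ZMod p) k).eval y) := by ring
    _ = (descPochhammer (ZMod p) M).eval (m : ZMod p)
        + ((k : ZMod p) + 1) * (descPochhammer (ZMod p) (M - 1)).eval (m : ZMod p) := by
        rw [b3, b4]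
    _ = ((m.choose M : ZMod p) * (M.choose (k + 1) : ZMod p)
        + (m.choose (M - 1) : ZMod p) * ((M - 1).choose k : ZMod p))
        * (((M - (k + 1))! : ZMod p) * ((k + 1)! : ZMod p)) := by
        rw [← e3, ← e4]; ring
end

section
/- Let p be prime, m, n, s ∈ {0,...,p-1}, and M = m+n+s-(p-1) with 0 ≤ M < p-1. Then for every integer j with 0 ≤ j ≤ M: (-1)^j C(m, M-j) C(n, j) ≡ ∑_{k=0}^{s} C(s,k) C(m, M-k) C(M-k, j-k) mod p. -/
/-!
Both sides factor through `C(m, M - j)`. On the right, `C(m, M - k) C(M - k, j - k)` equals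
`C(m, M - j) C(m - (M - j), j - k)`, and Vandermonde's identity sums the remaining factor over `k`
to `C(s + m - M + j, j)`. On the left, `n ≡ -(s + m - M + 1) (mod p)`, so the reflection
`(-1)^j C(-x, j) = C(x + j - 1, j)` of Pochhammer symbols makes `(-1)^j C(n, j)` congruent to
`C(s + m - M + j, j)`; dividing by `j!` is legitimate because `j < p`.
-/

open Finset Nat Polynomial

theorem Nat.choose_mul_choose_sub_eq {m M j k : ℕ} (hk : k ≤ j) (hj : j ≤ M) :
    m.choose (M - k) * (M - k).choose (j - k) =
      m.choose (M - j) * (m - (M - j)).choose (j - k) := by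
  rw [Nat.choose_symm_of_eq_add (by omega : M - k = (j - k) + (M - j)),
    Nat.choose_mul (by omega : M - j ≤ M - k), show M - k - (M - j) = j - k by omega]

theorem Nat.sum_range_ite_choose_mul_choose (s b j : ℕ) :
    ∑ k ∈ range (s + 1), (if k ≤ j then s.choose k * b.choose (j - k) else 0) =
      (s + b).choose j := by
  rw [← sum_filter, Nat.add_choose_eq, Nat.sum_antidiagonal_eq_sum_range_succ_mk]
  refine sum_subset (fun k hk => ?_) (fun k hk hks => ?_)
  · simp only [mem_filter, mem_range] at hk ⊢
    omega
  · simp only [mem_filter, mem_range, not_and, not_le] at hk hks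
    rw [Nat.choose_eq_zero_of_lt (by omega), zero_mul]

theorem Nat.sum_choose_mul_choose_mul_choose (m s M j : ℕ) (hj : j ≤ M) :
    ∑ k ∈ range (s + 1),
        (if k ≤ M ∧ k ≤ j then s.choose k * m.choose (M - k) * (M - k).choose (j - k) else 0) =
      m.choose (M - j) * (s + (m - (M - j))).choose j := by
  rw [← Nat.sum_range_ite_choose_mul_choose, mul_sum]
  refine sum_congr rfl fun k _ => ?_
  by_cases hk : k ≤ j
  · rw [if_pos ⟨hk.trans hj, hk⟩, if_pos hk, mul_assoc, Nat.choose_mul_choose_sub_eq hk hj]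
    ring
  · simp [hk]

theorem neg_one_pow_mul_choose_eq_choose_add {R : Type*} [CommRing R] {n t j : ℕ}
    (hnt : (n : R) + t + 1 = 0) (hj : IsUnit (j ! : R)) :
    (-1 : R) ^ j * n.choose j = (t + j).choose j := by
  have hn : (n : R) = -((t + 1 : ℕ) : R) := by
    push_cast
    linear_combination hnt
  refine hj.mul_left_cancel ?_
  calc (j ! : R) * ((-1) ^ j * n.choose j)
      = (-1) ^ j * (descPochhammer R j).eval (n : R) := by
        rw [descPochhammer_eval_eq_descFactorial, Nat.descFactorial_eq_factorial_mul_choose]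
        push_cast
        ring
    _ = (ascPochhammer R j).eval ((t + 1 : ℕ) : R) := by
        rw [← neg_neg ((t + 1 : ℕ) : R), ascPochhammer_eval_neg_eq_descPochhammer, hn]
    _ = j ! * (t + j).choose j := by
        rw [ascPochhammer_nat_eq_natCast_ascFactorial, Nat.ascFactorial_eq_factorial_mul_choose]
        push_cast
        rfl

theorem choose_congruence_general_general (p m n s M : ℕ) (hp : p.Prime)
    (hn : n ≤ p - 1)
    (hM : (M : ℤ) = (m : ℤ) + n + s - ((p : ℤ) - 1)) (hM2 : M < p - 1)
    (j : ℕ) (hj : j ≤ M) :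
    ((-1 : ZMod p) ^ j * (m.choose (M - j) : ZMod p) * (n.choose j : ZMod p)) =
      ∑ k ∈ Finset.range (s + 1),
        if k ≤ M ∧ k ≤ j then
          (s.choose k : ZMod p) * (m.choose (M - k) : ZMod p) *
            ((M - k).choose (j - k) : ZMod p)
        else 0 := by
  have : Fact p.Prime := ⟨hp⟩
  have hjfac : IsUnit (j ! : ZMod p) := by
    rw [isUnit_iff_ne_zero, Ne, ZMod.natCast_eq_zero_iff, hp.dvd_factorial]
    omega
  have hnt : (n : ZMod p) + (m + s - M : ℕ) + 1 = 0 := by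
    exact_mod_cast (ZMod.natCast_eq_zero_iff _ p).2 ⟨1, by omega⟩
  have hsum := congrArg (Nat.cast : ℕ → ZMod p) (Nat.sum_choose_mul_choose_mul_choose m s M j hj)
  push_cast at hsum
  rw [hsum]
  rcases le_or_gt (M - j) m with hmj | hmj
  · rw [show s + (m - (M - j)) = m + s - M + j by omega,
      ← neg_one_pow_mul_choose_eq_choose_add hnt hjfac]
    ring
  · simp [Nat.choose_eq_zero_of_lt hmj]

theorem choose_congruence_general (p m n s M : ℕ) (hp : p.Prime)
    (hm : m ≤ p - 1) (hn : n ≤ p - 1) (hs : s ≤ p - 1)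
    (hM : (M : ℤ) = (m : ℤ) + n + s - ((p : ℤ) - 1)) (hM2 : M < p - 1)
    (j : ℕ) (hj : j ≤ M) :
    ((-1 : ZMod p) ^ j * (m.choose (M - j) : ZMod p) * (n.choose j : ZMod p)) =
      ∑ k ∈ Finset.range (s + 1),
        if k ≤ M ∧ k ≤ j then
          (s.choose k : ZMod p) * (m.choose (M - k) : ZMod p) *
            ((M - k).choose (j - k) : ZMod p)
        else 0 :=
  choose_congruence_general_general p m n s M hp hn hM hM2 j hj
end

section
/- Let p be prime, m, n ∈ {1,...,p-1}, a ≠ b in {1,...,p-1}, and M = m+n-(p-1) ≥ 0. Then ∑_{j=0}^{M} C(m, M-j) C(n, j) a^(M-j) b^j ≡ (a-b)^M · C(m, p-n-1) mod p. -/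
/-!
Write `m = M + k`, so that `n = p - 1 - k`. Modulo `p`, `C(p - 1 - k, j) ≡ (-1)^j C(k + j, j)`,
and `C(M + k, M - j) C(k + j, j) = C(M + k, M) C(M, j)`; hence the sum is
`C(m, M) ∑ C(M, j) a^(M-j) (-b)^j = C(m, M) (a - b)^M`, and `C(m, M) = C(m, k)`.
-/

open Finset Nat

lemma choose_pred_sub_eq_neg_one_pow_mul_choose {p : ℕ} [Fact p.Prime] {k j : ℕ}
    (hkj : k + j < p) :
    ((p - 1 - k).choose j : ZMod p) = (-1) ^ j * ((k + j).choose j : ZMod p) := by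
  have hfac : (j ! : ZMod p) ≠ 0 := by
    rw [Ne, ZMod.natCast_eq_zero_iff, (Fact.out : p.Prime).dvd_factorial]
    omega
  -- Both sides times `j!` are products of `j` factors, and `p - 1 - k - i ≡ -(k + 1 + i)`.
  have hfactor : ∀ i ∈ range j, ((p - 1 - k - i : ℕ) : ZMod p) = -((k + 1 + i : ℕ) : ZMod p) := by
    intro i hi
    rw [eq_neg_iff_add_eq_zero, ← Nat.cast_add, ZMod.natCast_eq_zero_iff]
    have : p - 1 - k - i + (k + 1 + i) = p := by have := mem_range.mp hi; omega
    rw [this]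
  apply mul_left_cancel₀ hfac
  calc (j ! * (p - 1 - k).choose j : ZMod p)
      = ∏ i ∈ range j, ((p - 1 - k - i : ℕ) : ZMod p) := by
        rw [← Nat.cast_mul, ← descFactorial_eq_factorial_mul_choose, descFactorial_eq_prod_range,
          Nat.cast_prod]
    _ = (-1) ^ j * ∏ i ∈ range j, ((k + 1 + i : ℕ) : ZMod p) := by
        rw [prod_congr rfl hfactor, prod_neg, card_range]
    _ = j ! * ((-1) ^ j * (k + j).choose j) := by
        rw [← Nat.cast_prod, ← ascFactorial_eq_prod_range, ascFactorial_eq_factorial_mul_choose]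
        push_cast
        ring

lemma choose_sub_mul_choose_add {M k j : ℕ} (hj : j ≤ M) :
    (M + k).choose (M - j) * (k + j).choose j = (M + k).choose M * M.choose j := by
  have h := Nat.choose_mul (n := M + k) (k := M) (s := M - j) (by omega)
  rwa [show M + k - (M - j) = k + j by omega, show M - (M - j) = j by omega,
    Nat.choose_symm hj, eq_comm] at h

lemma sum_choose_mul_choose_pred_sub {p : ℕ} [Fact p.Prime] {M k : ℕ} (hMk : M + k < p)
    (a b : ZMod p) :
    ∑ j ∈ range (M + 1), ((M + k).choose (M - j) : ZMod p) * ((p - 1 - k).choose j : ZMod p) *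
        a ^ (M - j) * b ^ j = (a - b) ^ M * ((M + k).choose k : ZMod p) := by
  have hterm : ∀ j ∈ range (M + 1),
      ((M + k).choose (M - j) : ZMod p) * ((p - 1 - k).choose j : ZMod p) * a ^ (M - j) * b ^ j
        = ((M + k).choose M : ZMod p) * ((-b) ^ j * a ^ (M - j) * (M.choose j : ZMod p)) := by
    intro j hj
    have hjM : j ≤ M := Nat.lt_succ_iff.mp (mem_range.mp hj)
    rw [choose_pred_sub_eq_neg_one_pow_mul_choose (by omega), neg_pow]
    have := congrArg (Nat.cast : ℕ → ZMod p) (choose_sub_mul_choose_add (k := k) hjM)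
    push_cast at this
    linear_combination ((-1) ^ j * a ^ (M - j) * b ^ j) * this
  rw [sum_congr rfl hterm, ← mul_sum, ← add_pow, neg_add_eq_sub, ← Nat.choose_symm_add]
  ring

theorem convolution_eq_single_choose_general (p a b m n M : ℕ) (hp : p.Prime)
    (hm : 1 ≤ m ∧ m ≤ p - 1) (hn : 1 ≤ n ∧ n ≤ p - 1)
    (hM : (M : ℤ) = (m : ℤ) + n - ((p : ℤ) - 1)) :
    (∑ j ∈ Finset.range (M + 1),
        (m.choose (M - j) : ZMod p) * (n.choose j : ZMod p) *
          (a : ZMod p) ^ (M - j) * (b : ZMod p) ^ j) =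
      ((a : ZMod p) - (b : ZMod p)) ^ M * (m.choose (p - n - 1) : ZMod p) := by
  have := Fact.mk hp
  have hp1 := hp.one_le
  obtain ⟨k, rfl, rfl⟩ : ∃ k, m = M + k ∧ n = p - 1 - k := ⟨p - n - 1, by omega, by omega⟩
  rw [show p - (p - 1 - k) - 1 = k by omega]
  exact sum_choose_mul_choose_pred_sub (by omega) _ _

theorem convolution_eq_single_choose (p a b m n M : ℕ) (hp : p.Prime)
    (ha : 1 ≤ a ∧ a ≤ p - 1) (hb : 1 ≤ b ∧ b ≤ p - 1) (hab : a ≠ b)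
    (hm : 1 ≤ m ∧ m ≤ p - 1) (hn : 1 ≤ n ∧ n ≤ p - 1)
    (hM : (M : ℤ) = (m : ℤ) + n - ((p : ℤ) - 1)) :
    (∑ j ∈ Finset.range (M + 1),
        (m.choose (M - j) : ZMod p) * (n.choose j : ZMod p) *
          (a : ZMod p) ^ (M - j) * (b : ZMod p) ^ j) =
      ((a : ZMod p) - (b : ZMod p)) ^ M * (m.choose (p - n - 1) : ZMod p) :=
  convolution_eq_single_choose_general p a b m n M hp hm hn hM
end

section
/- Let p be prime, a, b, m, n, s ∈ {1,...,p-1} with a ≠ b, and M = m+n+s-(p-1) with 0 ≤ M < p-1. Then ∑_{j=0}^{M} C(m, M-j) C(n, j) a^(M-j) b^j ≡ ∑_{k=0}^{s} C(m, M-k) C(s, k) (a-b)^(M-k) (-b)^k mod p. -/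
/-!
Both sides are the coefficient of `t ^ M`, in `(1 + a t) ^ m (1 + b t) ^ n` and in
`(1 + (a - b) u) ^ m (1 - b u) ^ s` respectively. Over `𝔽_p`, by orthogonality of power sums,
the coefficient of `t ^ M` in a polynomial `f` of degree `< M + (p - 1)` is
`-∑ₜ f(t) t ^ (p - 1 - M)`. The substitution `u = t / (1 + b t)` turns one such sum into the
other, since `m + n + s + (p - 1 - M) = 2 (p - 1)` and `(1 + b t) ^ (p - 1) = 1`.
-/

open Finset Polynomial

namespace FiniteField

variable {K : Type*} [Field K] [Fintype K]

local notation "q" => Fintype.card K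

theorem sum_pow_eq_ite [DecidableEq K] {e : ℕ} (he : e ≠ 0) :
    ∑ x : K, x ^ e = if q - 1 ∣ e then -1 else 0 := by
  rw [← sum_pow_units K e]
  refine (sum_subset (subset_univ (univ.map ⟨Units.val, Units.val_injective⟩))
    fun x _ hx => ?_).symm.trans (sum_map _ _ _)
  obtain rfl : x = 0 := by_contra fun h => hx (mem_map_of_mem _ (mem_univ (Units.mk0 x h)))
  exact zero_pow he

theorem sum_eval_mul_pow_eq_neg_coeff (f : K[X]) {d : ℕ} (hd : d < q - 1)
    (hf : f.natDegree < d + (q - 1)) :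
    ∑ t : K, f.eval t * t ^ (q - 1 - d) = -f.coeff d := by
  classical
  have hsum : ∀ i < d + (q - 1), ∑ t : K, t ^ (i + (q - 1 - d)) = if i = d then -1 else 0 := by
    intro i hi
    rw [sum_pow_eq_ite (by omega)]
    refine if_congr ⟨fun h => ?_, fun h => ?_⟩ rfl rfl
    · have := Nat.eq_of_dvd_of_lt_two_mul (by omega) h (by omega)
      omega
    · rw [h, Nat.add_sub_cancel' hd.le]
  calc ∑ t : K, f.eval t * t ^ (q - 1 - d)
      = ∑ t : K, ∑ i ∈ range (d + (q - 1)), f.coeff i * t ^ (i + (q - 1 - d)) := by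
        simp_rw [eval_eq_sum_range' hf, sum_mul, pow_add, mul_assoc]
    _ = ∑ i ∈ range (d + (q - 1)), f.coeff i * ∑ t : K, t ^ (i + (q - 1 - d)) := by
        rw [sum_comm]; simp_rw [mul_sum]
    _ = ∑ i ∈ range (d + (q - 1)), f.coeff i * if i = d then -1 else 0 :=
        sum_congr rfl fun i hi => by rw [hsum i (mem_range.1 hi)]
    _ = -f.coeff d := by
        simp only [mul_ite, mul_neg_one, mul_zero, sum_ite_eq', mem_range,
          if_pos (show d < d + (q - 1) by omega)]

/-- `t ↦ t / (1 + b t)` is a bijection from `{t | 1 + b t ≠ 0}` onto `{u | 1 - b u ≠ 0}`, and the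
terms outside these sets vanish. -/
theorem sum_moebius_substitution (a b : K) {m n s e : ℕ} (hn : n ≠ 0) (hs : s ≠ 0)
    (h : m + n + s + e = 2 * (q - 1)) :
    ∑ t : K, (1 + a * t) ^ m * (1 + b * t) ^ n * t ^ e =
      ∑ u : K, (1 + (a - b) * u) ^ m * (1 + -b * u) ^ s * u ^ e := by
  classical
  have inv_fwd {t : K} (ht : 1 + b * t ≠ 0) : 1 + -b * (t / (1 + b * t)) = (1 + b * t)⁻¹ := by
    field_simp; ring
  have inv_bwd {u : K} (hu : 1 + -b * u ≠ 0) : 1 + b * (u / (1 + -b * u)) = (1 + -b * u)⁻¹ := by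
    rw [neg_mul, ← sub_eq_add_neg] at hu ⊢
    field_simp; ring
  rw [← sum_filter_of_ne (p := fun t => 1 + b * t ≠ 0) fun t _ ht hc =>
    ht (by rw [hc, zero_pow hn, mul_zero, zero_mul])]
  refine (sum_nbij' (fun t => t / (1 + b * t)) (fun u => u / (1 + -b * u)) ?_ ?_ ?_ ?_ ?_).trans
    (sum_filter_of_ne (p := fun u => 1 + -b * u ≠ 0) fun u _ hu hc =>
      hu (by rw [hc, zero_pow hs, mul_zero, zero_mul]))
  all_goals simp only [mem_filter, mem_univ, true_and]
  · exact fun t ht => by rw [inv_fwd ht]; exact inv_ne_zero ht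
  · exact fun u hu => by rw [inv_bwd hu]; exact inv_ne_zero hu
  · exact fun t ht => by rw [inv_fwd ht, div_inv_eq_mul, div_mul_cancel₀ _ ht]
  · exact fun u hu => by rw [inv_bwd hu, div_inv_eq_mul, div_mul_cancel₀ _ hu]
  · intro t ht
    have hpow : (1 + b * t) ^ n = ((1 + b * t) ^ (m + s + e))⁻¹ := by
      refine eq_inv_of_mul_eq_one_left ?_
      rw [← pow_add, show n + (m + s + e) = (q - 1) * 2 by omega, pow_mul,
        pow_card_sub_one_eq_one _ ht, one_pow]
    have hlin : 1 + (a - b) * (t / (1 + b * t)) = (1 + a * t) * (1 + b * t)⁻¹ := by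
      field_simp; ring
    rw [inv_fwd ht, hpow, hlin, div_eq_mul_inv]
    simp only [mul_pow, inv_pow, pow_add, mul_inv]
    ring

end FiniteField

namespace Polynomial

variable {R : Type*} [CommSemiring R]

theorem coeff_one_add_C_mul_X_pow (a : R) (n k : ℕ) :
    ((1 + C a * X) ^ n).coeff k = n.choose k * a ^ k := by
  rw [show (1 + C a * X) ^ n = ((1 + X) ^ n).comp (C a * X) by simp, comp_C_mul_X_coeff,
    coeff_one_add_X_pow]

theorem coeff_mul_eq_sum_range (f g : R[X]) (d : ℕ) :
    (f * g).coeff d = ∑ j ∈ range (d + 1), f.coeff (d - j) * g.coeff j := by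
  rw [coeff_mul, ← Nat.sum_antidiagonal_swap, Nat.sum_antidiagonal_eq_sum_range_succ_mk]
  rfl

end Polynomial

theorem Finset.sum_range_succ_eq_sum_range_succ_ite {M : Type*} [AddCommMonoid M] (f : ℕ → M)
    {m n : ℕ} (hf : ∀ k, n < k → f k = 0) :
    ∑ k ∈ range (m + 1), f k = ∑ k ∈ range (n + 1), if k ≤ m then f k else 0 := by
  rw [← sum_filter]
  refine (sum_subset (fun k hk => ?_) fun k hk hk' => hf k ?_).symm <;>
    simp only [mem_filter, mem_range] at * <;> omega

theorem convolution_general_form_general (p a b m n s M : ℕ) (hp : p.Prime)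
    (hn : 1 ≤ n ∧ n ≤ p - 1) (hs : 1 ≤ s ∧ s ≤ p - 1)
    (hM : (M : ℤ) = (m : ℤ) + n + s - ((p : ℤ) - 1)) (hM2 : M < p - 1) :
    (∑ j ∈ Finset.range (M + 1),
        (m.choose (M - j) : ZMod p) * (n.choose j : ZMod p) *
          (a : ZMod p) ^ (M - j) * (b : ZMod p) ^ j) =
      ∑ k ∈ Finset.range (s + 1),
        if k ≤ M then
          (m.choose (M - k) : ZMod p) * (s.choose k : ZMod p) *
            ((a : ZMod p) - (b : ZMod p)) ^ (M - k) * (-(b : ZMod p)) ^ k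
        else 0 := by
  have := Fact.mk hp
  have hq : Fintype.card (ZMod p) = p := ZMod.card p
  have hdeg {u v : ZMod p} {k : ℕ} :
      ((1 + C u * X) ^ m * (1 + C v * X) ^ k).natDegree ≤ m + k := by
    compute_degree
  have hcoeff : ((1 + C (a : ZMod p) * X) ^ m * (1 + C (b : ZMod p) * X) ^ n).coeff M =
      ((1 + C ((a : ZMod p) - b) * X) ^ m * (1 + C (-(b : ZMod p)) * X) ^ s).coeff M := by
    refine neg_injective ?_
    rw [← FiniteField.sum_eval_mul_pow_eq_neg_coeff _ (by omega) (hdeg.trans_lt (by omega)),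
      ← FiniteField.sum_eval_mul_pow_eq_neg_coeff _ (by omega) (hdeg.trans_lt (by omega))]
    simp only [eval_mul, eval_pow, eval_add, eval_one, eval_C, eval_X]
    exact FiniteField.sum_moebius_substitution _ _ (by omega) (by omega) (by omega)
  rw [coeff_mul_eq_sum_range, coeff_mul_eq_sum_range] at hcoeff
  simp only [coeff_one_add_C_mul_X_pow] at hcoeff
  rw [← sum_range_succ_eq_sum_range_succ_ite _ fun k hk => by simp [Nat.choose_eq_zero_of_lt hk]]
  convert hcoeff using 2 <;> ring

theorem convolution_general_form (p a b m n s M : ℕ) (hp : p.Prime)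
    (ha : 1 ≤ a ∧ a ≤ p - 1) (hb : 1 ≤ b ∧ b ≤ p - 1) (hab : a ≠ b)
    (hm : 1 ≤ m ∧ m ≤ p - 1) (hn : 1 ≤ n ∧ n ≤ p - 1) (hs : 1 ≤ s ∧ s ≤ p - 1)
    (hM : (M : ℤ) = (m : ℤ) + n + s - ((p : ℤ) - 1)) (hM2 : M < p - 1) :
    (∑ j ∈ Finset.range (M + 1),
        (m.choose (M - j) : ZMod p) * (n.choose j : ZMod p) *
          (a : ZMod p) ^ (M - j) * (b : ZMod p) ^ j) =
      ∑ k ∈ Finset.range (s + 1),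
        if k ≤ M then
          (m.choose (M - k) : ZMod p) * (s.choose k : ZMod p) *
            ((a : ZMod p) - (b : ZMod p)) ^ (M - k) * (-(b : ZMod p)) ^ k
        else 0 :=
  convolution_general_form_general p a b m n s M hp hn hs hM hM2
end
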